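/- Let G : ℝᵖ → ℝ be Fréchet differentiable at a point v with ‖v‖ = 1, and let κ ∈ ℝᵖ satisfy ‖κ‖ = 1, ⟨v, κ⟩ = 0, and ⟨∇G(v), κ⟩ > 0. Define the sequence m_0 = κ and m_{k+1} = (v + m_k)/‖v + m_k‖. Then every m_k is well defined with ‖m_k‖ = 1, and there exists K such that G(m_K) > G(v). -/

import Mathlib

/-!
The iterates lie on the great circle `γ t = cos t • v + sin t • κ` through `v` and `κ`: by the
half-angle formulas `v + γ (2t) = (2 cos t) • γ t`, so normalizing the midpoint halves the angle and
`m k = γ (π / 2 ^ (k + 1))`. Since `γ 0 = v` and `γ' 0 = κ`, the function `G ∘ γ` has derivative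
`⟪∇G v, κ⟫ > 0` at `0`, hence `G (γ t) > G v` for all small `t > 0`, and the angles tend to `0⁺`.
-/

open RealInnerProductSpace Filter Topology Real

theorem HasDerivAt.eventually_nhdsGT_lt {f : ℝ → ℝ} {f' x : ℝ} (hf : HasDerivAt f f' x)
    (hf' : 0 < f') : ∀ᶠ t in 𝓝[>] x, f x < f t := by
  filter_upwards [(hasDerivAt_iff_tendsto_slope_left_right.1 hf).2.eventually (lt_mem_nhds hf'),
    self_mem_nhdsWithin] with t hslope hxt
  exact (slope_pos_iff hxt).1 hslope

theorem tendsto_div_two_pow_nhdsGT_zero {c : ℝ} (hc : 0 < c) :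
    Tendsto (fun k : ℕ ↦ c / 2 ^ k) atTop (𝓝[>] 0) :=
  tendsto_nhdsWithin_iff.2 ⟨(tendsto_pow_atTop_atTop_of_one_lt one_lt_two).const_div_atTop c,
    Eventually.of_forall fun k ↦ show 0 < c / 2 ^ k by positivity⟩

section GreatCircle

variable {E : Type*}

noncomputable def greatCircle [AddCommGroup E] [Module ℝ E] (v κ : E) (t : ℝ) : E :=
  cos t • v + sin t • κ

section Module

variable [AddCommGroup E] [Module ℝ E] (v κ : E)

@[simp]
theorem greatCircle_zero : greatCircle v κ 0 = v := by
  simp [greatCircle]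

@[simp]
theorem greatCircle_pi_div_two : greatCircle v κ (π / 2) = κ := by
  simp [greatCircle]

theorem add_greatCircle_two_mul (t : ℝ) :
    v + greatCircle v κ (2 * t) = (2 * cos t) • greatCircle v κ t := by
  simp only [greatCircle, cos_two_mul, sin_two_mul, smul_add, smul_smul]
  module

end Module

section InnerProductSpace

variable [NormedAddCommGroup E] [InnerProductSpace ℝ E] {v κ : E}

theorem norm_greatCircle (hv : ‖v‖ = 1) (hκ : ‖κ‖ = 1) (horth : ⟪v, κ⟫ = 0) (t : ℝ) :
    ‖greatCircle v κ t‖ = 1 := by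
  have hsq : ‖greatCircle v κ t‖ ^ 2 = 1 := by
    rw [greatCircle, norm_add_sq_real, norm_smul, norm_smul, real_inner_smul_left,
      real_inner_smul_right, hv, hκ, horth, norm_eq_abs, norm_eq_abs]
    nlinarith [sin_sq_add_cos_sq t, sq_abs (sin t), sq_abs (cos t)]
  exact (pow_eq_one_iff_of_nonneg (norm_nonneg _) two_ne_zero).1 hsq

theorem normalize_add_greatCircle_two_mul (hv : ‖v‖ = 1) (hκ : ‖κ‖ = 1) (horth : ⟪v, κ⟫ = 0)
    {t : ℝ} (ht : 0 < cos t) :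
    ‖v + greatCircle v κ (2 * t)‖⁻¹ • (v + greatCircle v κ (2 * t)) = greatCircle v κ t := by
  rw [add_greatCircle_two_mul, norm_smul, norm_greatCircle hv hκ horth, mul_one, norm_eq_abs,
    abs_of_pos (by positivity), smul_smul, inv_mul_cancel₀ (by positivity), one_smul]

theorem hasDerivAt_greatCircle (v κ : E) (t : ℝ) :
    HasDerivAt (greatCircle v κ) (-sin t • v + cos t • κ) t :=
  ((hasDerivAt_cos t).smul_const v).add ((hasDerivAt_sin t).smul_const κ)

theorem eq_greatCircle_of_normalize_midpoint (hv : ‖v‖ = 1) (hκ : ‖κ‖ = 1) (horth : ⟪v, κ⟫ = 0)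
    {m : ℕ → E} (hm0 : m 0 = κ) (hrec : ∀ k, m (k + 1) = ‖v + m k‖⁻¹ • (v + m k)) (k : ℕ) :
    m k = greatCircle v κ (π / 2 ^ (k + 1)) := by
  induction k with
  | zero => simpa using hm0
  | succ k ih =>
    have hangle : π / 2 ^ (k + 1) = 2 * (π / 2 ^ (k + 2)) := by ring
    have hcos : 0 < cos (π / 2 ^ (k + 2)) := by
      refine cos_pos_of_mem_Ioo ⟨by linarith [pi_pos, show 0 < π / 2 ^ (k + 2) by positivity], ?_⟩
      gcongr
      calc (2 : ℝ) = 2 ^ 1 := (pow_one 2).symm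
        _ < 2 ^ (k + 2) := pow_lt_pow_right₀ one_lt_two (by omega)
    rw [hrec, ih, hangle, normalize_add_greatCircle_two_mul hv hκ horth hcos]

end InnerProductSpace

end GreatCircle

/-- Termination of the inner loop of the alternative PING iteration: if `G` is
differentiable at a unit vector `v`, and `κ` is a unit vector orthogonal to `v`
with `⟪∇G(v), κ⟫ > 0`, then the sequence `m 0 = κ`,
`m (k+1) = (v + m k)/‖v + m k‖` consists of well-defined unit vectors and
reaches a point where `G` exceeds `G v`. -/
theorem stmt_12 {p : ℕ} (G : EuclideanSpace ℝ (Fin p) → ℝ)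
    (v κ : EuclideanSpace ℝ (Fin p))
    (hdiff : DifferentiableAt ℝ G v)
    (hv : ‖v‖ = 1) (hκ : ‖κ‖ = 1) (horth : ⟪v, κ⟫ = 0)
    (hasc : 0 < ⟪gradient G v, κ⟫)
    (m : ℕ → EuclideanSpace ℝ (Fin p))
    (hm0 : m 0 = κ)
    (hrec : ∀ k, m (k + 1) = ‖v + m k‖⁻¹ • (v + m k)) :
    (∀ k, ‖m k‖ = 1) ∧ ∃ K, G v < G (m K) := by
  have hm := eq_greatCircle_of_normalize_midpoint hv hκ horth hm0 hrec
  refine ⟨fun k ↦ hm k ▸ norm_greatCircle hv hκ horth _, ?_⟩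
  have hG : HasFDerivAt G (InnerProductSpace.toDual ℝ _ (gradient G v)) (greatCircle v κ 0) := by
    simpa using hasGradientAt_iff_hasFDerivAt.1 hdiff.hasGradientAt
  have hderiv : HasDerivAt (G ∘ greatCircle v κ) ⟪gradient G v, κ⟫ 0 := by
    simpa using hG.comp_hasDerivAt 0 (hasDerivAt_greatCircle v κ 0)
  have hangle := (tendsto_div_two_pow_nhdsGT_zero pi_pos).comp (tendsto_add_atTop_nat 1)
  obtain ⟨K, hK⟩ := (hangle.eventually (hderiv.eventually_nhdsGT_lt hasc)).exists
  exact ⟨K, by simpa [hm] using hK⟩
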